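/- Maximal degree lemma: let G be a finite connected graph with first Betti number L (number of independent cycles, L = |E| − |V| + 1), and let C be an irreducible nonlocal cut of G with respect to a boundary bipartition. Then |C| ≤ L + 1. -/
import Mathlib

open SimpleGraph

/-- Counting lemma: if every vertex is reachable from some root in `R`,
then `|V| ≤ |E| + |R|`. -/
lemma aux_count {V : Type*} [Fintype V] [DecidableEq V] (H : SimpleGraph V)
    [Fintype H.edgeSet] (R : Finset V)
    (hreach : ∀ v, ∃ r ∈ R, H.Reachable r v) :
    Fintype.card V ≤ H.edgeFinset.card + R.card := by
  classical
  have hex : ∀ c : H.ConnectedComponent, ∃ r, r ∈ R ∧ H.connectedComponentMk r = c := by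
    intro c
    obtain ⟨v, hv⟩ := c.exists_rep
    obtain ⟨r, hr, hre⟩ := hreach v
    exact ⟨r, hr, by rw [← hv]; exact ConnectedComponent.sound hre⟩
  set root : V → V := fun v => (hex (H.connectedComponentMk v)).choose with hrootdef
  have hroot_mem : ∀ v, root v ∈ R := fun v => (hex (H.connectedComponentMk v)).choose_spec.1
  have hroot_reach : ∀ v, H.Reachable (root v) v := fun v =>
    ConnectedComponent.exact (hex (H.connectedComponentMk v)).choose_spec.2
  have hroot_adj : ∀ u v, H.Adj u v → root u = root v := by
    intro u v h
    have hcc : H.connectedComponentMk u = H.connectedComponentMk v :=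
      ConnectedComponent.sound h.reachable
    simp only [hrootdef]
    exact congrArg (fun c => (hex c).choose) hcc
  set d : V → ℕ := fun v => H.dist (root v) v with hd
  have hpar : ∀ v ∉ R, ∃ u, H.Adj v u ∧ d u < d v := by
    intro v hv
    have hre := hroot_reach v
    have hne : root v ≠ v := fun h => hv (h ▸ hroot_mem v)
    have hpos : 0 < H.dist (root v) v := hre.pos_dist_of_ne hne
    obtain ⟨p, hp⟩ := hre.exists_walk_length_eq_dist
    obtain ⟨u, h, q', hq⟩ := Walk.exists_eq_cons_of_ne (Ne.symm hne) p.reverse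
    refine ⟨u, h, ?_⟩
    have hru : root u = root v := (hroot_adj v u h).symm
    have h1 : H.dist (root u) u ≤ q'.length := by
      rw [hru, dist_comm]
      exact dist_le q'
    have h2 : q'.length + 1 = p.length := by
      have := congrArg Walk.length hq
      simp at this
      omega
    simp only [hd]
    omega
  set f : V → Sym2 V := fun v => if h : v ∈ R then s(v, v) else s(v, (hpar v h).choose)
    with hf
  have hmaps : ∀ v ∈ Finset.univ \ R, f v ∈ H.edgeFinset := by
    intro v hv
    rw [Finset.mem_sdiff] at hv
    have hv' := hv.2
    simp only [hf, dif_neg hv']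
    rw [mem_edgeFinset, mem_edgeSet]
    exact (hpar v hv').choose_spec.1
  have hinj : Set.InjOn f ↑(Finset.univ \ R) := by
    intro v hv u hu hvu
    simp only [Finset.coe_sdiff, Finset.coe_univ, Set.mem_diff, Finset.mem_coe] at hv hu
    have hv' := hv.2
    have hu' := hu.2
    simp only [hf, dif_neg hv', dif_neg hu'] at hvu
    rw [Sym2.eq_iff] at hvu
    rcases hvu with ⟨h1, _⟩ | ⟨h1, h2⟩
    · exact h1
    · exfalso
      have hdv := (hpar v hv').choose_spec.2
      have hdu := (hpar u hu').choose_spec.2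
      rw [h2] at hdv
      rw [← h1] at hdu
      omega
  have hcard : (Finset.univ \ R).card ≤ H.edgeFinset.card :=
    Finset.card_le_card_of_injOn f hmaps hinj
  have h1 : (Finset.univ \ R).card = Fintype.card V - R.card := by
    rw [Finset.card_sdiff_of_subset (Finset.subset_univ R), Finset.card_univ]
  have h2 : R.card ≤ Fintype.card V := Finset.card_le_univ R
  omega

/-- Walk surgery: a walk avoiding `s \ {e}` gives reachability in `G.deleteEdges s`
possibly broken at the endpoints of `e`. -/
lemma aux_surgery {V : Type*} (G : SimpleGraph V) (s : Set (Sym2 V)) (a b : V)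
    {x y : V} (p : (G.deleteEdges (s \ {s(a,b)})).Walk x y) :
    (G.deleteEdges s).Reachable x y ∨
    ((G.deleteEdges s).Reachable x a ∧ (G.deleteEdges s).Reachable b y) ∨
    ((G.deleteEdges s).Reachable x b ∧ (G.deleteEdges s).Reachable a y) := by
  induction p with
  | nil => exact Or.inl (Reachable.refl _)
  | @cons x w y h p ih =>
    by_cases hxw : s(x, w) = s(a, b)
    · rw [Sym2.eq_iff] at hxw
      rcases hxw with ⟨hxa, hwb⟩ | ⟨hxb, hwa⟩
      · subst hxa; subst hwb
        rcases ih with hr | ⟨hr1, hr2⟩ | ⟨hr1, hr2⟩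
        · exact Or.inr (Or.inl ⟨Reachable.refl _, hr⟩)
        · exact Or.inr (Or.inl ⟨Reachable.refl _, hr2⟩)
        · exact Or.inl ((Reachable.refl _).trans hr2)
      · subst hxb; subst hwa
        rcases ih with hr | ⟨hr1, hr2⟩ | ⟨hr1, hr2⟩
        · exact Or.inr (Or.inr ⟨Reachable.refl _, hr⟩)
        · exact Or.inl hr2
        · exact Or.inr (Or.inr ⟨Reachable.refl _, hr2⟩)
    · have hadj : (G.deleteEdges s).Adj x w := by
        rw [deleteEdges_adj] at h ⊢
        refine ⟨h.1, fun hmem => h.2 ⟨hmem, hxw⟩⟩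
      rcases ih with hr | ⟨hr1, hr2⟩ | ⟨hr1, hr2⟩
      · exact Or.inl (hadj.reachable.trans hr)
      · exact Or.inr (Or.inl ⟨hadj.reachable.trans hr1, hr2⟩)
      · exact Or.inr (Or.inr ⟨hadj.reachable.trans hr1, hr2⟩)

/-- A nonlocal cut of a graph `G` with respect to a boundary bipartition `(Lb, Rb)`. -/
def IsNonlocalCut {V : Type*} (G : SimpleGraph V) (Lb Rb : Set V) (C : Set (Sym2 V)) : Prop :=
  C ⊆ G.edgeSet ∧
  (∀ x ∈ Lb, ∀ y ∈ Rb, ¬ (G.deleteEdges C).Reachable x y) ∧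
  (∀ x ∈ Lb, ∀ y ∈ Lb, (G.deleteEdges C).Reachable x y) ∧
  (∀ x ∈ Rb, ∀ y ∈ Rb, (G.deleteEdges C).Reachable x y)

/-- Maximal degree lemma: an irreducible nonlocal cut `C` of a finite connected graph
`G` with first Betti number `L = |E| − |V| + 1` satisfies `|C| ≤ L + 1`, i.e.
`|C| + |V| ≤ |E| + 2`. -/
theorem stmt15 {V : Type*} [Fintype V] [DecidableEq V] (G : SimpleGraph V)
    [DecidableRel G.Adj] (hG : G.Connected)
    (Lb Rb : Set V) (hL : Lb.Nonempty) (hR : Rb.Nonempty) (hdisj : Disjoint Lb Rb)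
    (C : Finset (Sym2 V)) (hC : IsNonlocalCut G Lb Rb ↑C)
    (hirr : ∀ e ∈ (↑C : Set (Sym2 V)), ¬ IsNonlocalCut G Lb Rb ((↑C : Set (Sym2 V)) \ {e})) :
    C.card + Fintype.card V ≤ G.edgeFinset.card + 2 := by
  classical
  obtain ⟨hCsub, hsep, hLL, hRR⟩ := hC
  obtain ⟨x0, hx0⟩ := hL
  obtain ⟨y0, hy0⟩ := hR
  set H := G.deleteEdges (↑C : Set (Sym2 V)) with hH
  have claimA : ∀ a b : V, s(a, b) ∈ (↑C : Set (Sym2 V)) →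
      (H.Reachable x0 a ∧ H.Reachable y0 b) ∨ (H.Reachable x0 b ∧ H.Reachable y0 a) := by
    intro a b he
    have hns := hirr s(a, b) he
    have hle : H ≤ G.deleteEdges ((↑C : Set (Sym2 V)) \ {s(a, b)}) :=
      SimpleGraph.deleteEdges_anti Set.diff_subset
    have hfail : ¬ (∀ x ∈ Lb, ∀ y ∈ Rb,
        ¬ (G.deleteEdges ((↑C : Set (Sym2 V)) \ {s(a, b)})).Reachable x y) := by
      intro hsep'
      exact hns ⟨fun e he' => hCsub he'.1, hsep',
        fun x hx y hy => (hLL x hx y hy).mono hle,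
        fun x hx y hy => (hRR x hx y hy).mono hle⟩
    push_neg at hfail
    obtain ⟨x, hx, y, hy, hre⟩ := hfail
    obtain ⟨p⟩ := hre
    rcases aux_surgery G (↑C) a b p with hr | ⟨h1, h2⟩ | ⟨h1, h2⟩
    · exact absurd hr (hsep x hx y hy)
    · exact Or.inl ⟨(hLL x0 hx0 x hx).trans h1, (hRR y0 hy0 y hy).trans h2.symm⟩
    · exact Or.inr ⟨(hLL x0 hx0 x hx).trans h1, (hRR y0 hy0 y hy).trans h2.symm⟩
  have hstep : ∀ (u v : V), G.Walk u v →
      (H.Reachable x0 u ∨ H.Reachable y0 u) → (H.Reachable x0 v ∨ H.Reachable y0 v) := by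
    intro u v p
    induction p with
    | nil => exact id
    | @cons u w v h p ih =>
      intro hu
      apply ih
      by_cases hmem : s(u, w) ∈ (↑C : Set (Sym2 V))
      · rcases claimA u w hmem with ⟨_, h2⟩ | ⟨h1, _⟩
        · exact Or.inr h2
        · exact Or.inl h1
      · have hadj : H.Adj u w := by
          rw [hH, SimpleGraph.deleteEdges_adj]
          exact ⟨h, hmem⟩
        rcases hu with h' | h'
        · exact Or.inl (h'.trans hadj.reachable)
        · exact Or.inr (h'.trans hadj.reachable)
  have hkey : ∀ v, ∃ r ∈ ({x0, y0} : Finset V), H.Reachable r v := by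
    intro v
    obtain ⟨p⟩ := hG.preconnected x0 v
    rcases hstep x0 v p (Or.inl (Reachable.refl _)) with h | h
    · exact ⟨x0, by simp, h⟩
    · exact ⟨y0, by simp, h⟩
  haveI : DecidableRel H.Adj := Classical.decRel _
  have hcount := aux_count H ({x0, y0} : Finset V) hkey
  have hRcard : ({x0, y0} : Finset V).card ≤ 2 :=
    le_trans (Finset.card_insert_le _ _) (by simp)
  have hCsubF : C ⊆ G.edgeFinset := by
    intro e he
    rw [mem_edgeFinset]
    exact hCsub (by exact_mod_cast he)
  have hEF : H.edgeFinset = G.edgeFinset \ C := by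
    ext e
    simp [hH, edgeSet_deleteEdges, Finset.mem_sdiff, mem_edgeFinset]
  have hcard2 : H.edgeFinset.card = G.edgeFinset.card - C.card := by
    rw [hEF, Finset.card_sdiff_of_subset hCsubF]
  have hle2 : C.card ≤ G.edgeFinset.card := Finset.card_le_card hCsubF
  omega
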